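/- Let M be a closed Riemannian manifold, let x and y be points of M, and fix a minimizing geodesic ρ from x to y. For a loop γ based at x, apply a length-nonincreasing curve-shortening process in the space of paths from x to y to the path γ*ρ, and let τ be the geodesic from x to y thus obtained (the obstructing geodesic of γ). If two loops γ_1 and γ_2 based at x have the same obstructing geodesic τ, then γ_1 and γ_2 can be connected by a homotopy through loops based at x of length at most max{length(γ_1), length(γ_2)} + 2·dist(x,y). -/

import Mathlib

/-!
We model a closed Riemannian manifold `M^n` as a compact metric space carrying a smooth
manifold structure (charted over `ℝ^n`, without boundary) whose distance is the intrinsic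
(Riemannian) distance; the latter is encoded by the hypothesis `hgeo` that any two points
are joined by a minimizing geodesic realizing the distance (Hopf–Rinow for closed
Riemannian manifolds).  Geodesics are formalized metrically: a geodesic is a constant
speed path which is locally an isometry up to its speed factor, i.e. a locally
length-minimizing curve parametrized proportionally to arc length on `[0,1]`; hence two
geodesics are distinct (as curves up to reparametrization) iff they are unequal as paths.
-/

open scoped Manifold unitInterval ENNReal
open Metric

noncomputable section

/-- The length of a path in a metric space, defined as its total variation. -/
def pathLength {M : Type*} [PseudoMetricSpace M] {x y : M} (γ : Path x y) : ℝ≥0∞ :=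
  eVariationOn γ Set.univ

/-- A path `γ : [0,1] → M` is a *geodesic (segment)* if it has constant speed `c ≥ 0` and
is locally an isometry up to the factor `c`; this is the metric formulation of a locally
length-minimizing curve parametrized proportionally to arc length.  For a loop (`x = y`)
no condition is imposed "across" the base point, so a geodesic loop need not be smooth at
its base point. -/
def IsGeodesic {M : Type*} [MetricSpace M] {x y : M} (γ : Path x y) : Prop :=
  ∃ c : ℝ, 0 ≤ c ∧ ∀ t : I, ∃ ε > 0, ∀ s s' : I,
    |(s : ℝ) - (t : ℝ)| < ε → |(s' : ℝ) - (t : ℝ)| < ε →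
      dist (γ s) (γ s') = c * |(s : ℝ) - (s' : ℝ)|

end

noncomputable section

/-- `τ` is the *obstructing geodesic* of the loop `γ` based at `x` (with respect to the
fixed minimizing geodesic `ρ` from `x` to `y`) if `τ` is a geodesic from `x` to `y`
obtained from `γ * ρ` by a curve-shortening process on the space of paths from `x` to `y`:
a deformation fixing the endpoints (a path homotopy) along which the length does not
increase. -/
def IsObstructingGeodesic {M : Type*} [MetricSpace M] {x y : M}
    (γ : Path x x) (ρ τ : Path x y) : Prop :=
  IsGeodesic τ ∧ ∃ H : Path.Homotopy (γ.trans ρ) τ,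
    ∀ s s' : I, s ≤ s' → pathLength (H.eval s') ≤ pathLength (H.eval s)

/-!
Sliding `ρ` across `γ` gives homotopies of loops `γ ≃ γ·(ρ·ρ⁻¹) ≃ (γ·ρ)·ρ⁻¹ ≃ τ·ρ⁻¹`, the last
one running the curve-shortening homotopy of `γ·ρ` and appending `ρ⁻¹`. Since shortening never
lengthens `γ·ρ`, every intermediate loop has length at most `length(γ) + 2·length(ρ)`. As `γ₁`
and `γ₂` both end at `τ·ρ⁻¹`, composing the first homotopy with the reverse of the second
connects them.
-/

open Set unitInterval

section PathLength

variable {X : Type*} [PseudoMetricSpace X] {a b c d : X}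

theorem eVariationOn_le_pathLength_of_monotoneOn {q : I → X} {S : Set I} (p : Path c d)
    {φ : I → I} (hφ : MonotoneOn φ S) (h : EqOn q (p ∘ φ) S) :
    eVariationOn q S ≤ pathLength p :=
  (eVariationOn.eq_of_eqOn h).trans_le
    (eVariationOn.comp_le_of_monotoneOn p φ hφ (mapsTo_univ _ _))

theorem eVariationOn_le_pathLength_of_antitoneOn {q : I → X} {S : Set I} (p : Path c d)
    {φ : I → I} (hφ : AntitoneOn φ S) (h : EqOn q (p ∘ φ) S) :
    eVariationOn q S ≤ pathLength p :=
  (eVariationOn.eq_of_eqOn h).trans_le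
    (eVariationOn.comp_le_of_antitoneOn p φ hφ (mapsTo_univ _ _))

theorem pathLength_eq_eVariationOn_add (q : Path a b) (m : I) :
    pathLength q = eVariationOn q (Icc 0 m) + eVariationOn q (Icc m 1) := by
  have h_split :=
    eVariationOn.Icc_add_Icc q (s := univ) (a := 0) (c := 1) m.2.1 m.2.2 (mem_univ m)
  simp only [univ_inter] at h_split
  rw [show Icc (0 : I) 1 = univ from eq_univ_of_forall fun t => ⟨t.2.1, t.2.2⟩] at h_split
  exact h_split.symm

theorem pathLength_le_of_monotone (p : Path c d) (q : Path a b) {φ : I → I} (hφ : Monotone φ)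
    (h : ∀ t, q t = p (φ t)) : pathLength q ≤ pathLength p :=
  eVariationOn_le_pathLength_of_monotoneOn p (hφ.monotoneOn univ) fun t _ => h t

@[simp]
theorem pathLength_symm (p : Path a b) : pathLength p.symm = pathLength p := by
  have key : ∀ {a b : X} (p : Path a b), pathLength p.symm ≤ pathLength p := fun p =>
    eVariationOn_le_pathLength_of_antitoneOn p (φ := σ)
      (fun _ _ _ _ h => symm_le_symm.2 h) fun _ _ => rfl
  exact (key p).antisymm (by simpa using key p.symm)

theorem pathLength_trans_le (p : Path a b) (r : Path b c) :
    pathLength (p.trans r) ≤ pathLength p + pathLength r := by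
  have mono_two_mul_sub :
      ∀ c : ℝ, Monotone fun t : I => projIcc 0 1 zero_le_one (2 * (t : ℝ) - c) :=
    fun c s t h => monotone_projIcc _ (by linarith [Subtype.coe_le_coe.2 h])
  rw [pathLength_eq_eVariationOn_add _ ⟨1 / 2, by norm_num, by norm_num⟩]
  refine add_le_add (eVariationOn_le_pathLength_of_monotoneOn p
      (by simpa using (mono_two_mul_sub 0).monotoneOn _) fun t ht => ?_)
    (eVariationOn_le_pathLength_of_monotoneOn r ((mono_two_mul_sub 1).monotoneOn _) fun t ht => ?_)
  · exact (Path.extend_extends' _ t).symm.trans (Path.extend_trans_of_le_half _ _ ht.2)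
  · exact (Path.extend_extends' _ t).symm.trans (Path.extend_trans_of_half_le _ _ ht.1)

end PathLength

namespace Path.Homotopy

variable {X : Type*} [PseudoMetricSpace X] {a b c d : X}

def maxLength {p q : Path a b} (F : Homotopy p q) : ℝ≥0∞ :=
  ⨆ s, pathLength (F.eval s)

theorem pathLength_eval_le_maxLength {p q : Path a b} (F : Homotopy p q) (s : I) :
    pathLength (F.eval s) ≤ F.maxLength :=
  le_iSup (fun s => pathLength (F.eval s)) s

theorem maxLength_eq_of_antitone {p q : Path a b} (F : Homotopy p q)
    (hF : Antitone fun s => pathLength (F.eval s)) :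
    F.maxLength = pathLength p :=
  le_antisymm (iSup_le fun s => by simpa using hF (show (0 : I) ≤ s from s.2.1))
    (by simpa using F.pathLength_eval_le_maxLength 0)

@[simp]
theorem maxLength_refl (p : Path a b) : (Homotopy.refl p).maxLength = pathLength p :=
  (iSup_const : ⨆ _ : I, pathLength p = _)

@[simp]
theorem maxLength_cast {p₀ p₁ q₀ q₁ : Path a b} (F : Homotopy p₀ p₁) (h₀ : p₀ = q₀)
    (h₁ : p₁ = q₁) : (F.cast h₀ h₁).maxLength = F.maxLength :=
  rfl

@[simp]
theorem maxLength_symm {p q : Path a b} (F : Homotopy p q) : F.symm.maxLength = F.maxLength :=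
  symm_involutive.surjective.iSup_comp fun s => pathLength (F.eval s)

theorem maxLength_trans_le {p₀ p₁ p₂ : Path a b} (F : Homotopy p₀ p₁) (G : Homotopy p₁ p₂) :
    (F.trans G).maxLength ≤ max F.maxLength G.maxLength := by
  refine iSup_le fun s => ?_
  by_cases hs : (s : ℝ) ≤ 1 / 2
  · have : (F.trans G).eval s = F.eval ⟨2 * s, (mul_pos_mem_iff zero_lt_two).2 ⟨s.2.1, hs⟩⟩ := by
      ext t
      exact (trans_apply F G (s, t)).trans (dif_pos hs)
    exact this ▸ (F.pathLength_eval_le_maxLength _).trans (le_max_left _ _)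
  · have : (F.trans G).eval s =
        G.eval ⟨2 * s - 1, two_mul_sub_one_mem_iff.2 ⟨(not_le.1 hs).le, s.2.2⟩⟩ := by
      ext t
      exact (trans_apply F G (s, t)).trans (dif_neg hs)
    exact this ▸ (G.pathLength_eval_le_maxLength _).trans (le_max_right _ _)

theorem maxLength_hcomp_le {p₀ q₀ : Path a b} {p₁ q₁ : Path b c} (F : Homotopy p₀ q₀)
    (G : Homotopy p₁ q₁) : (F.hcomp G).maxLength ≤ F.maxLength + G.maxLength :=
  iSup_le fun s => (pathLength_trans_le (F.eval s) (G.eval s)).trans <|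
    add_le_add (F.pathLength_eval_le_maxLength s) (G.pathLength_eval_le_maxLength s)

theorem maxLength_reparam_le (p : Path a b) {f : I → I} (hf : Continuous f) (hf₀ : f 0 = 0)
    (hf₁ : f 1 = 1) (hmono : Monotone f) :
    (reparam p f hf hf₀ hf₁).maxLength ≤ pathLength p := by
  refine iSup_le fun s => pathLength_le_of_monotone p _ (fun t t' h => ?_) fun t => rfl
  change (σ s : ℝ) * t + s * f t ≤ (σ s : ℝ) * t' + s * f t'
  gcongr
  exacts [(σ s).2.1, s.2.1, hmono h]

theorem monotone_transReflReparamAux : Monotone transReflReparamAux := fun t t' h => by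
  unfold transReflReparamAux
  split_ifs <;> linarith [Subtype.coe_le_coe.2 h, t.2.2, t'.2.2]

theorem monotone_transAssocReparamAux : Monotone transAssocReparamAux := fun t t' h => by
  unfold transAssocReparamAux
  split_ifs <;> linarith [Subtype.coe_le_coe.2 h]

theorem maxLength_transRefl_le (p : Path a b) : (transRefl p).maxLength ≤ pathLength p := by
  rw [transRefl, maxLength_symm, maxLength_cast]
  exact maxLength_reparam_le p _ _ _ fun _ _ h => monotone_transReflReparamAux h

theorem maxLength_transAssoc_le (p : Path a b) (q : Path b c) (r : Path c d) :
    (transAssoc p q r).maxLength ≤ pathLength p + pathLength q + pathLength r := by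
  rw [transAssoc, maxLength_symm, maxLength_cast, add_assoc]
  calc _ ≤ pathLength (p.trans (q.trans r)) :=
        maxLength_reparam_le _ _ _ _ fun _ _ h => monotone_transAssocReparamAux h
    _ ≤ pathLength p + (pathLength q + pathLength r) :=
        (pathLength_trans_le _ _).trans (add_le_add le_rfl (pathLength_trans_le _ _))

theorem maxLength_reflTransSymm_le (p : Path a b) :
    (reflTransSymm p).maxLength ≤ 2 * pathLength p := by
  refine iSup_le fun s => ?_
  let φ : I → I := fun t => ⟨reflTransSymmAux (s, t), reflTransSymmAux_mem_I _⟩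
  have hφ₁ : MonotoneOn φ (Icc 0 ⟨1 / 2, by norm_num, by norm_num⟩) := fun t ht t' ht' h => by
    change reflTransSymmAux (s, t) ≤ reflTransSymmAux (s, t')
    have ht₁ : (t : ℝ) ≤ 1 / 2 := ht.2
    have ht₁' : (t' : ℝ) ≤ 1 / 2 := ht'.2
    simp only [reflTransSymmAux, if_pos ht₁, if_pos ht₁']
    nlinarith [s.2.1, Subtype.coe_le_coe.2 h]
  have hφ₂ : AntitoneOn φ (Icc ⟨1 / 2, by norm_num, by norm_num⟩ 1) := fun t ht t' ht' h => by
    change reflTransSymmAux (s, t') ≤ reflTransSymmAux (s, t)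
    have ht₁ : (1 / 2 : ℝ) ≤ t := ht.1
    have ht₁' : (1 / 2 : ℝ) ≤ t' := ht'.1
    unfold reflTransSymmAux
    split_ifs <;> nlinarith [s.2.1, Subtype.coe_le_coe.2 h]
  rw [pathLength_eq_eVariationOn_add _ ⟨1 / 2, by norm_num, by norm_num⟩, two_mul]
  exact add_le_add (eVariationOn_le_pathLength_of_monotoneOn p hφ₁ fun _ _ => rfl)
    (eVariationOn_le_pathLength_of_antitoneOn p hφ₂ fun _ _ => rfl)

theorem exists_homotopy_trans_symm_maxLength_le {γ : Path a b} {ρ : Path b c} {τ : Path a c}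
    (H : Homotopy (γ.trans ρ) τ) :
    ∃ K : Homotopy γ (τ.trans ρ.symm),
      K.maxLength ≤ max (pathLength γ + 2 * pathLength ρ) (H.maxLength + pathLength ρ) := by
  refine ⟨(transRefl γ).symm.trans (((refl γ).hcomp (reflTransSymm ρ)).trans
    ((transAssoc γ ρ ρ.symm).symm.trans (H.hcomp (refl ρ.symm)))), ?_⟩
  have h_transRefl : (transRefl γ).symm.maxLength ≤ pathLength γ + 2 * pathLength ρ := by
    rw [maxLength_symm]
    exact (maxLength_transRefl_le γ).trans le_self_add
  have h_reflTransSymm : ((refl γ).hcomp (reflTransSymm ρ)).maxLength ≤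
      pathLength γ + 2 * pathLength ρ :=
    (maxLength_hcomp_le _ _).trans <| by
      rw [maxLength_refl]
      exact add_le_add le_rfl (maxLength_reflTransSymm_le ρ)
  have h_transAssoc : (transAssoc γ ρ ρ.symm).symm.maxLength ≤
      pathLength γ + 2 * pathLength ρ := by
    simpa [two_mul, add_assoc] using maxLength_transAssoc_le γ ρ ρ.symm
  have h_shorten : (H.hcomp (refl ρ.symm)).maxLength ≤ H.maxLength + pathLength ρ := by
    simpa using maxLength_hcomp_le H (refl ρ.symm)
  refine (maxLength_trans_le _ _).trans (max_le (le_max_of_le_left h_transRefl) ?_)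
  refine (maxLength_trans_le _ _).trans (max_le (le_max_of_le_left h_reflTransSymm) ?_)
  exact (maxLength_trans_le _ _).trans
    (max_le (le_max_of_le_left h_transAssoc) (le_max_of_le_right h_shorten))

end Path.Homotopy

open Path.Homotopy in
theorem IsObstructingGeodesic.exists_homotopy_maxLength_le {M : Type*} [MetricSpace M] {x y : M}
    {γ : Path x x} {ρ τ : Path x y} (h : IsObstructingGeodesic γ ρ τ) :
    ∃ K : Path.Homotopy γ (τ.trans ρ.symm), K.maxLength ≤ pathLength γ + 2 * pathLength ρ := by
  obtain ⟨-, H, hH⟩ := h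
  obtain ⟨K, hK⟩ := exists_homotopy_trans_symm_maxLength_le H
  refine ⟨K, hK.trans (max_le le_rfl ?_)⟩
  calc H.maxLength + pathLength ρ ≤ pathLength γ + pathLength ρ + pathLength ρ := by
        rw [maxLength_eq_of_antitone H hH]
        exact add_le_add_left (pathLength_trans_le γ ρ) _
    _ = pathLength γ + 2 * pathLength ρ := by rw [two_mul, add_assoc]

theorem loops_with_same_obstructing_geodesic_homotopic_general
    {M : Type*} [MetricSpace M]
    (x y : M) (ρ : Path x y)
    (hρmin : pathLength ρ = ENNReal.ofReal (dist x y))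
    (γ₁ γ₂ : Path x x) (τ : Path x y)
    (h₁ : IsObstructingGeodesic γ₁ ρ τ)
    (h₂ : IsObstructingGeodesic γ₂ ρ τ) :
    ∃ H : Path.Homotopy γ₁ γ₂,
      ∀ s : I, pathLength (H.eval s) ≤
        max (pathLength γ₁) (pathLength γ₂) + ENNReal.ofReal (2 * dist x y) := by
  obtain ⟨K₁, hK₁⟩ := h₁.exists_homotopy_maxLength_le
  obtain ⟨K₂, hK₂⟩ := h₂.exists_homotopy_maxLength_le
  refine ⟨K₁.trans K₂.symm, fun s => ?_⟩
  have h_two : ENNReal.ofReal (2 * dist x y) = 2 * pathLength ρ := by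
    rw [hρmin, ENNReal.ofReal_mul zero_le_two, ENNReal.ofReal_ofNat]
  calc pathLength ((K₁.trans K₂.symm).eval s)
      ≤ max (pathLength γ₁ + 2 * pathLength ρ) (pathLength γ₂ + 2 * pathLength ρ) :=
        ((K₁.trans K₂.symm).pathLength_eval_le_maxLength s).trans <|
          (Path.Homotopy.maxLength_trans_le _ _).trans <|
            max_le_max hK₁ ((Path.Homotopy.maxLength_symm K₂).trans_le hK₂)
    _ = max (pathLength γ₁) (pathLength γ₂) + ENNReal.ofReal (2 * dist x y) := by
        rw [h_two, max_add_add_right]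

/-- Let `M` be a closed Riemannian manifold, let `x` and `y` be points of
`M`, and fix a minimizing geodesic `ρ` from `x` to `y`.  If two loops `γ₁` and `γ₂` based
at `x` have the same obstructing geodesic `τ`, then `γ₁` and `γ₂` can be connected by a
homotopy through loops based at `x` of length at most
`max {length(γ₁), length(γ₂)} + 2 · dist(x,y)`. -/
theorem loops_with_same_obstructing_geodesic_homotopic
    {n : ℕ} {M : Type*} [MetricSpace M] [CompactSpace M]
    [ChartedSpace (EuclideanSpace ℝ (Fin n)) M]
    [IsManifold (𝓡 n) (⊤ : ℕ∞) M]
    (hgeo : ∀ a b : M, ∃ γ : Path a b,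
      IsGeodesic γ ∧ pathLength γ = ENNReal.ofReal (dist a b))
    (x y : M) (ρ : Path x y)
    (hρ : IsGeodesic ρ) (hρmin : pathLength ρ = ENNReal.ofReal (dist x y))
    (γ₁ γ₂ : Path x x) (τ : Path x y)
    (h₁ : IsObstructingGeodesic γ₁ ρ τ)
    (h₂ : IsObstructingGeodesic γ₂ ρ τ) :
    ∃ H : Path.Homotopy γ₁ γ₂,
      ∀ s : I, pathLength (H.eval s) ≤
        max (pathLength γ₁) (pathLength γ₂) + ENNReal.ofReal (2 * dist x y) :=
  loops_with_same_obstructing_geodesic_homotopic_general x y ρ hρmin γ₁ γ₂ τ h₁ h₂
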